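/- For every norm ⦀·⦀ on ℝ^d and every function φ : {0,…,d} → ℝ̄, the Capra conjugate of φ∘ℓ0 is given by (φ∘ℓ0)^¢(y) = sup_{l ∈ {0,…,d}} ( ⦀y⦀_{l,★} − φ(l) ) for all y ∈ ℝ^d, with the convention ⦀·⦀_{0,★} = 0 and where the subtraction is the Moreau lower addition of ⦀y⦀_{l,★} and −φ(l). -/

import Mathlib

/-!
Splitting the supremum defining the Capra conjugate along the level sets `ℓ0 = l` reduces the
claim to `sup {¢(x, y) | ℓ0(x) = l} = ⦀y⦀_{l,★}`, because adding a constant of `ℝ̄` commutes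
with suprema for the lower addition.

For `x ∈ R_K \ {0}` the vector `x / ⦀x⦀` lies in the unit ball of `R_K`, so
`¢(x, y) ≤ ⦀y_K⦀_{K,★}`; conversely `⟨x, y⟩ ≤ ¢(x, y)` on that ball whenever `⟨x, y⟩ ≥ 0`.
Hence the supremum of `¢(·, y)` over `ℓ0 ≤ l` is `⦀y⦀_{l,★}`. Finally, `x` with `ℓ0(x) < l` is
the limit of `x + t v` as `t → 0`, where `v` switches on `l - ℓ0(x)` fresh coordinates, so
`ℓ0(x + t v) = l` for `t ≠ 0`; since `¢(·, y)` is continuous off `0` (every norm on `ℝ^d`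
being continuous), the level set `ℓ0 = l` has the same supremum.
-/
open scoped BigOperators

noncomputable section

/-- The Euclidean pairing `⟨x,y⟩ = ∑ i, x i * y i` on `Fin d → ℝ`. -/
def dotp {d : ℕ} (x y : Fin d → ℝ) : ℝ := ∑ i, x i * y i

/-- The coordinate subspace `R_K` of vectors vanishing outside `K`. -/
def RK {d : ℕ} (K : Finset (Fin d)) : Set (Fin d → ℝ) := {x | ∀ j ∉ K, x j = 0}

/-- Orthogonal projection onto `R_K`. -/
def projK {d : ℕ} (K : Finset (Fin d)) (x : Fin d → ℝ) : Fin d → ℝ :=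
  fun i => if i ∈ K then x i else 0

/-- The ℓ0 pseudonorm: number of nonzero components. -/
def ell0 {d : ℕ} (x : Fin d → ℝ) : ℕ := (Function.support x).ncard

/-- `N` is a norm on `ℝ^d`. -/
structure IsNorm {d : ℕ} (N : (Fin d → ℝ) → ℝ) : Prop where
  eq_zero_iff : ∀ x, N x = 0 ↔ x = 0
  smul : ∀ (c : ℝ) (x : Fin d → ℝ), N (c • x) = |c| * N x
  triangle : ∀ x y, N (x + y) ≤ N x + N y

/-- `⦀y⦀_{K,★}`: the dual norm (w.r.t. the Euclidean pairing), on the subspace `R_K`,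
of the restriction of `N` to `R_K`. -/
def restStar {d : ℕ} (N : (Fin d → ℝ) → ℝ) (K : Finset (Fin d)) (y : Fin d → ℝ) : ℝ :=
  sSup {r | ∃ x ∈ RK K, N x ≤ 1 ∧ r = dotp x y}

/-- The dual coordinate-k norm `⦀y⦀_{k,★} = sup_{|K| ≤ k} ⦀y_K⦀_{K,★}`. -/
def dualCoord {d : ℕ} (N : (Fin d → ℝ) → ℝ) (k : ℕ) (y : Fin d → ℝ) : ℝ :=
  sSup {r | ∃ K : Finset (Fin d), K.card ≤ k ∧ r = restStar N K (projK K y)}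

/-- The coordinate-k norm: the dual norm of the dual coordinate-k norm. -/
def coordNorm {d : ℕ} (N : (Fin d → ℝ) → ℝ) (k : ℕ) (x : Fin d → ℝ) : ℝ :=
  sSup {r | ∃ y : Fin d → ℝ, dualCoord N k y ≤ 1 ∧ r = dotp x y}

/-- The Capra coupling `¢(x,y) = ⟨x,y⟩/⦀x⦀` (with `¢(0,y) = 0`). -/
def capra {d : ℕ} (N : (Fin d → ℝ) → ℝ) (x y : Fin d → ℝ) : ℝ :=
  if x = 0 then 0 else dotp x y / N x

/-- Capra conjugate `f^¢(y) = sup_x ( ¢(x,y) ∔ (−f(x)) )`.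
(EReal addition is the Moreau lower addition: `⊤ + ⊥ = ⊥`.) -/
def capraConj {d : ℕ} (N : (Fin d → ℝ) → ℝ) (f : (Fin d → ℝ) → EReal)
    (y : Fin d → ℝ) : EReal :=
  ⨆ x : Fin d → ℝ, ((capra N x y : ℝ) : EReal) + (- f x)

/-- Capra biconjugate `f^{¢¢'}(x) = sup_y ( ¢(x,y) ∔ (−f^¢(y)) )`. -/
def capraBiconj {d : ℕ} (N : (Fin d → ℝ) → ℝ) (f : (Fin d → ℝ) → EReal)
    (x : Fin d → ℝ) : EReal :=
  ⨆ y : Fin d → ℝ, ((capra N x y : ℝ) : EReal) + (- capraConj N f y)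

/-- Fenchel conjugate `g^★(y) = sup_x ( ⟨x,y⟩ ∔ (−g(x)) )`. -/
def fenchelConj {d : ℕ} (g : (Fin d → ℝ) → EReal) (y : Fin d → ℝ) : EReal :=
  ⨆ x : Fin d → ℝ, ((dotp x y : ℝ) : EReal) + (- g x)

open Topology

section

variable {d : ℕ} {N : (Fin d → ℝ) → ℝ}

lemma EReal.iSup_add {ι : Sort*} (g : ι → EReal) (c : EReal) :
    (⨆ i, g i) + c = ⨆ i, (g i + c) := by
  rcases eq_or_ne c ⊥ with rfl | hc
  · simp
  rcases eq_or_ne (⨆ i, g i) ⊥ with hg | hg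
  · simp [iSup_eq_bot.mp hg]
  exact Monotone.map_iSup_of_continuousAt (f := (· + c))
    ((EReal.continuousAt_add (Or.inr hc) (Or.inl hg)).comp
      (continuousAt_id.prodMk continuousAt_const))
    (fun _ _ h => add_le_add h le_rfl) (EReal.bot_add c)

namespace IsNorm

lemma map_zero (hN : IsNorm N) : N 0 = 0 := (hN.eq_zero_iff 0).mpr rfl

lemma map_neg (hN : IsNorm N) (x : Fin d → ℝ) : N (-x) = N x := by
  simpa using hN.smul (-1) x

lemma nonneg (hN : IsNorm N) (x : Fin d → ℝ) : 0 ≤ N x := by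
  have h := hN.triangle x (-x)
  rw [add_neg_cancel, hN.map_zero, hN.map_neg] at h
  linarith

lemma pos (hN : IsNorm N) {x : Fin d → ℝ} (hx : x ≠ 0) : 0 < N x :=
  (hN.nonneg x).lt_of_ne fun h => hx ((hN.eq_zero_iff x).mp h.symm)

lemma convexOn (hN : IsNorm N) : ConvexOn ℝ Set.univ N := by
  refine ⟨convex_univ, fun x _ z _ a b ha hb _ => ?_⟩
  calc N (a • x + b • z) ≤ N (a • x) + N (b • z) := hN.triangle _ _
    _ = a • N x + b • N z := by
      rw [hN.smul, hN.smul, abs_of_nonneg ha, abs_of_nonneg hb, smul_eq_mul, smul_eq_mul]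

lemma continuous (hN : IsNorm N) : Continuous N :=
  continuousOn_univ.mp (hN.convexOn.continuousOn isOpen_univ)

lemma exists_norm_le_mul (hN : IsNorm N) : ∃ C, ∀ x, ‖x‖ ≤ C * N x := by
  obtain ⟨C, hC⟩ := (isCompact_sphere (0 : Fin d → ℝ) 1).exists_bound_of_continuousOn
    (hN.continuous.continuousOn.inv₀ fun x hx => (hN.pos (ne_zero_of_mem_unit_sphere ⟨x, hx⟩)).ne')
  refine ⟨C, fun x => ?_⟩
  rcases eq_or_ne x 0 with rfl | hx
  · simp [hN.map_zero]
  have hxpos : 0 < ‖x‖ := norm_pos_iff.mpr hx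
  have hu : ‖x‖⁻¹ • x ∈ Metric.sphere (0 : Fin d → ℝ) 1 := by
    simp [norm_smul, hxpos.ne']
  have h := hC _ hu
  rw [Pi.inv_apply, hN.smul, abs_of_pos (inv_pos.mpr hxpos), mul_inv, inv_inv, norm_mul,
    Real.norm_of_nonneg hxpos.le, Real.norm_of_nonneg (inv_nonneg.mpr (hN.nonneg x))] at h
  have hNx := hN.pos hx
  rwa [← div_eq_mul_inv, div_le_iff₀ hNx] at h

lemma isCompact_unitBall (hN : IsNorm N) : IsCompact {x | N x ≤ 1} := by
  obtain ⟨C, hC⟩ := hN.exists_norm_le_mul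
  refine Metric.isCompact_of_isClosed_isBounded (isClosed_le hN.continuous continuous_const)
    (isBounded_iff_forall_norm_le.mpr ⟨|C|, fun x hx => (hC x).trans ?_⟩)
  nlinarith [le_abs_self C, abs_nonneg C, hN.nonneg x, show N x ≤ 1 from hx]

end IsNorm

lemma dotp_eq_dotProduct (x y : Fin d → ℝ) : dotp x y = x ⬝ᵥ y := rfl

lemma continuous_dotp (y : Fin d → ℝ) : Continuous fun x => dotp x y :=
  continuous_id.dotProduct continuous_const

lemma capra_zero (y : Fin d → ℝ) : capra N 0 y = 0 := if_pos rfl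

lemma capra_of_ne_zero {x : Fin d → ℝ} (hx : x ≠ 0) (y : Fin d → ℝ) :
    capra N x y = dotp x y / N x := if_neg hx

lemma capra_neg (hN : IsNorm N) (x y : Fin d → ℝ) : capra N (-x) y = -capra N x y := by
  rcases eq_or_ne x 0 with rfl | hx
  · simp [capra_zero]
  rw [capra_of_ne_zero hx, capra_of_ne_zero (neg_ne_zero.mpr hx), hN.map_neg,
    dotp_eq_dotProduct, neg_dotProduct, neg_div, dotp_eq_dotProduct]

lemma continuousAt_capra (hN : IsNorm N) {x : Fin d → ℝ} (hx : x ≠ 0) (y : Fin d → ℝ) :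
    ContinuousAt (fun z => capra N z y) x :=
  ((continuous_dotp y).continuousAt.div hN.continuous.continuousAt (hN.pos hx).ne').congr
    ((eventually_ne_nhds hx).mono fun _ hz => (capra_of_ne_zero hz y).symm)

lemma dotp_projK {K : Finset (Fin d)} {x : Fin d → ℝ} (hx : x ∈ RK K) (y : Fin d → ℝ) :
    dotp x (projK K y) = dotp x y := by
  refine Finset.sum_congr rfl fun i _ => ?_
  by_cases hi : i ∈ K
  · simp [projK, hi]
  · simp [projK, hi, hx i hi]

lemma zero_mem_RK (K : Finset (Fin d)) : (0 : Fin d → ℝ) ∈ RK K := fun _ _ => rfl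

lemma restStar_projK (K : Finset (Fin d)) (y : Fin d → ℝ) :
    restStar N K (projK K y) = restStar N K y := by
  unfold restStar
  congr 1
  ext r
  refine exists_congr fun x => and_congr_right fun hx => ?_
  rw [dotp_projK hx]

lemma bddAbove_restStar (hN : IsNorm N) (K : Finset (Fin d)) (y : Fin d → ℝ) :
    BddAbove {r | ∃ x ∈ RK K, N x ≤ 1 ∧ r = dotp x y} := by
  refine (hN.isCompact_unitBall.bddAbove_image (continuous_dotp y).continuousOn).mono ?_
  rintro r ⟨x, -, hx, rfl⟩
  exact ⟨x, hx, rfl⟩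

lemma le_restStar (hN : IsNorm N) {K : Finset (Fin d)} {x : Fin d → ℝ} (hx : x ∈ RK K)
    (hx1 : N x ≤ 1) (y : Fin d → ℝ) : dotp x y ≤ restStar N K y :=
  le_csSup (bddAbove_restStar hN K y) ⟨x, hx, hx1, rfl⟩

lemma capra_le_restStar (hN : IsNorm N) {K : Finset (Fin d)} {x : Fin d → ℝ} (hx : x ∈ RK K)
    (y : Fin d → ℝ) : capra N x y ≤ restStar N K y := by
  rcases eq_or_ne x 0 with rfl | hx0
  · simpa [capra_zero, dotp_eq_dotProduct] using
      le_restStar hN (zero_mem_RK K) (by simp [hN.map_zero]) y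
  have hNx := hN.pos hx0
  have hu : (N x)⁻¹ • x ∈ RK K := fun j hj => by simp [hx j hj]
  have hu1 : N ((N x)⁻¹ • x) ≤ 1 := by
    rw [hN.smul, abs_of_pos (inv_pos.mpr hNx), inv_mul_cancel₀ hNx.ne']
  simpa [capra_of_ne_zero hx0, dotp_eq_dotProduct, div_eq_inv_mul] using le_restStar hN hu hu1 y

lemma exists_lt_capra_of_lt_restStar (hN : IsNorm N) {K : Finset (Fin d)} {y : Fin d → ℝ}
    {r : ℝ} (hr : r < restStar N K y) : ∃ x ∈ RK K, r < capra N x y := by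
  unfold restStar at hr
  obtain ⟨_, ⟨x, hx, hx1, rfl⟩, hrx⟩ :=
    exists_lt_of_lt_csSup (by exact ⟨_, 0, zero_mem_RK K, by simp [hN.map_zero], rfl⟩) hr
  rcases le_or_gt (dotp x y) 0 with hneg | hpos
  · exact ⟨0, zero_mem_RK K, by rw [capra_zero]; linarith⟩
  have hx0 : x ≠ 0 := by rintro rfl; simp [dotp_eq_dotProduct] at hpos
  refine ⟨x, hx, hrx.trans_le ?_⟩
  rw [capra_of_ne_zero hx0, le_div_iff₀ (hN.pos hx0)]
  exact mul_le_of_le_one_right hpos.le hx1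

lemma bddAbove_dualCoord (l : ℕ) (y : Fin d → ℝ) :
    BddAbove {r | ∃ K : Finset (Fin d), K.card ≤ l ∧ r = restStar N K (projK K y)} :=
  ((Set.finite_range fun K : Finset (Fin d) => restStar N K (projK K y)).subset
    (by rintro _ ⟨K, -, rfl⟩; exact ⟨K, rfl⟩)).bddAbove

lemma restStar_le_dualCoord {K : Finset (Fin d)} {l : ℕ} (hK : K.card ≤ l) (y : Fin d → ℝ) :
    restStar N K y ≤ dualCoord N l y := by
  rw [← restStar_projK]
  exact le_csSup (bddAbove_dualCoord l y) ⟨K, hK, rfl⟩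

lemma exists_lt_restStar_of_lt_dualCoord {l : ℕ} {y : Fin d → ℝ} {r : ℝ}
    (hr : r < dualCoord N l y) : ∃ K : Finset (Fin d), K.card ≤ l ∧ r < restStar N K y := by
  unfold dualCoord at hr
  obtain ⟨_, ⟨K, hK, rfl⟩, hrK⟩ :=
    exists_lt_of_lt_csSup (by exact ⟨_, ∅, Nat.zero_le l, rfl⟩) hr
  exact ⟨K, hK, by rwa [restStar_projK] at hrK⟩

lemma ell0_eq_card_filter (x : Fin d → ℝ) :
    ell0 x = (Finset.univ.filter fun i => x i ≠ 0).card := by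
  rw [ell0, ← Set.ncard_coe_finset]
  congr 1
  ext i
  simp

lemma mem_RK_filter (x : Fin d → ℝ) : x ∈ RK (Finset.univ.filter fun i => x i ≠ 0) :=
  fun j hj => by simpa using hj

lemma ell0_le_card_of_mem_RK {K : Finset (Fin d)} {x : Fin d → ℝ} (hx : x ∈ RK K) :
    ell0 x ≤ K.card := by
  rw [ell0_eq_card_filter]
  refine Finset.card_le_card fun i hi => ?_
  by_contra hiK
  exact (Finset.mem_filter.mp hi).2 (hx i hiK)

lemma ell0_le (x : Fin d → ℝ) : ell0 x ≤ d := by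
  simpa using ell0_le_card_of_mem_RK (K := Finset.univ) (x := x) fun j hj =>
    (hj (Finset.mem_univ j)).elim

lemma capra_le_dualCoord (hN : IsNorm N) (x y : Fin d → ℝ) :
    capra N x y ≤ dualCoord N (ell0 x) y :=
  (capra_le_restStar hN (mem_RK_filter x) y).trans
    (restStar_le_dualCoord (ell0_eq_card_filter x).ge y)

lemma exists_ell0_le_lt_capra (hN : IsNorm N) {l : ℕ} {y : Fin d → ℝ} {r : ℝ}
    (hr : r < dualCoord N l y) : ∃ x, ell0 x ≤ l ∧ r < capra N x y := by
  obtain ⟨K, hK, hrK⟩ := exists_lt_restStar_of_lt_dualCoord hr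
  obtain ⟨x, hx, hrx⟩ := exists_lt_capra_of_lt_restStar hN hrK
  exact ⟨x, (ell0_le_card_of_mem_RK hx).trans hK, hrx⟩

lemma exists_ell0_add_smul_eq (x : Fin d → ℝ) {l : ℕ} (hxl : ell0 x ≤ l) (hl : l ≤ d) :
    ∃ v : Fin d → ℝ, ∀ t : ℝ, t ≠ 0 → ell0 (x + t • v) = l := by
  classical
  set S := Finset.univ.filter fun i => x i ≠ 0
  have hS : ell0 x = S.card := ell0_eq_card_filter x
  obtain ⟨J, hJS, hJcard⟩ := Finset.exists_subset_card_eq (s := Finset.univ \ S)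
    (n := l - ell0 x) (by rw [Finset.card_univ_sdiff, Fintype.card_fin]; omega)
  have hdisj : Disjoint S J := Finset.disjoint_of_subset_right hJS Finset.disjoint_sdiff
  set v : Fin d → ℝ := fun i => if i ∈ J then 1 else 0
  refine ⟨v, fun t ht => ?_⟩
  have hsupp : Finset.univ.filter (fun i => (x + t • v) i ≠ 0) = S ∪ J := by
    ext i
    by_cases hiJ : i ∈ J
    · have hxi : x i = 0 := by simpa [S] using Finset.disjoint_right.mp hdisj hiJ
      simp [v, hiJ, hxi, ht]
    · simp [S, v, hiJ]
  rw [ell0_eq_card_filter, hsupp, Finset.card_union_of_disjoint hdisj, hJcard, ← hS]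
  omega

lemma exists_ell0_eq_lt_capra (hN : IsNorm N) {l : ℕ} (hl : l ≤ d) {y : Fin d → ℝ} {r : ℝ}
    (hr : r < dualCoord N l y) : ∃ x, ell0 x = l ∧ r < capra N x y := by
  obtain ⟨x, hxl, hrx⟩ := exists_ell0_le_lt_capra hN hr
  obtain ⟨v, hv⟩ := exists_ell0_add_smul_eq x hxl hl
  rcases eq_or_ne x 0 with rfl | hx
  · rw [capra_zero] at hrx
    rcases le_or_gt 0 (capra N v y) with hv0 | hv0
    · exact ⟨v, by simpa using hv 1 one_ne_zero, hrx.trans_le hv0⟩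
    · exact ⟨-v, by simpa using hv (-1) (by norm_num), by rw [capra_neg hN]; linarith⟩
  have hcont : ContinuousAt (fun t : ℝ => capra N (x + t • v) y) 0 :=
    (continuousAt_capra hN hx y).comp_of_eq (by fun_prop) (by simp)
  have hnear : ∀ᶠ t in 𝓝[≠] (0 : ℝ), r < capra N (x + t • v) y ∧ t ≠ 0 :=
    ((hcont.eventually (lt_mem_nhds (by simpa using hrx))).filter_mono nhdsWithin_le_nhds).and
      self_mem_nhdsWithin
  obtain ⟨t, hrt, ht⟩ := hnear.exists
  exact ⟨x + t • v, hv t ht, hrt⟩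

lemma iSup_capra_ell0_eq (hN : IsNorm N) {l : ℕ} (hl : l ≤ d) (y : Fin d → ℝ) :
    ⨆ x : {x : Fin d → ℝ // ell0 x = l}, (capra N x y : EReal) = dualCoord N l y := by
  refine le_antisymm (iSup_le fun ⟨x, hx⟩ => ?_) (EReal.ge_of_forall_gt_iff_ge.mp fun r hr => ?_)
  · exact EReal.coe_le_coe_iff.mpr (hx ▸ capra_le_dualCoord hN x y)
  · obtain ⟨x, hx, hrx⟩ := exists_ell0_eq_lt_capra hN hl (EReal.coe_lt_coe_iff.mp hr)
    exact (EReal.coe_le_coe_iff.mpr hrx.le).trans (le_iSup_of_le ⟨x, hx⟩ le_rfl)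

lemma iSup_eq_iSup_fin_iSup_ell0_eq {α : Type*} [CompleteLattice α] (F : (Fin d → ℝ) → ℕ → α) :
    ⨆ x, F x (ell0 x) = ⨆ l : Fin (d + 1), ⨆ x : {x : Fin d → ℝ // ell0 x = l}, F x l := by
  refine le_antisymm (iSup_le fun x => ?_) (iSup_le fun l => iSup_le ?_)
  · exact le_iSup_of_le ⟨ell0 x, Nat.lt_succ_of_le (ell0_le x)⟩ (le_iSup_of_le ⟨x, rfl⟩ le_rfl)
  · rintro ⟨x, hx⟩
    exact (congrArg (F x) hx).ge.trans (le_iSup (fun x => F x (ell0 x)) x)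

end

theorem statement10 {d : ℕ} (N : (Fin d → ℝ) → ℝ) (hN : IsNorm N)
    (φ : ℕ → EReal) (y : Fin d → ℝ) :
    capraConj N (fun x => φ (ell0 x)) y
      = ⨆ l : Fin (d + 1), (((dualCoord N l y : ℝ) : EReal) + (- φ l)) := by
  rw [capraConj, iSup_eq_iSup_fin_iSup_ell0_eq fun x l => (capra N x y : EReal) + -φ l]
  refine iSup_congr fun l => ?_
  rw [← EReal.iSup_add, iSup_capra_ell0_eq hN (Nat.lt_succ_iff.mp l.isLt)]
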